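/- arXiv:1910.03312 — 7 statements merged into one kernel-verified Lean document; each statement's English description precedes it below -/
import Mathlib

section
/- Let 1 ≤ n, m ≤ N. Then the maps ∇ₙ and ∇ₘ anticommute: ∇ₙ ∘ ∇ₘ = −(∇ₘ ∘ ∇ₙ) as linear maps A → A; in particular ∇ₙ ∘ ∇ₙ = 0. -/
/-!
Writing `∇ₙ = i · δ_{D n}` with the twisted commutator `δ_d x = d x - φ(x) d`, the hypotheses
`φ ∘ φ = id` and `φ (D n) = -D n` make the cross terms of `δ_a δ_b + δ_b δ_a` cancel, leaving the
ordinary commutator of `x` with the anticommutator `a b + b a`. For `a = D n`, `b = D m` this is a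
scalar, so the commutator vanishes; the case `n = m` follows since `A` has no `2`-torsion.
-/

section TwistedCommutator

variable {A : Type*} [Ring A] {F : Type*} [FunLike F A A] [RingHomClass F A A]

def twistedComm (φ : F) (d x : A) : A := d * x - φ x * d

theorem twistedComm_smul {R : Type*} [CommSemiring R] [Algebra R A] (φ : A →ₐ[R] A)
    (d : A) (c : R) (x : A) : twistedComm φ d (c • x) = c • twistedComm φ d x := by
  simp only [twistedComm, map_smul, smul_sub, mul_smul_comm, smul_mul_assoc]

theorem twistedComm_twistedComm_add_twistedComm_twistedComm (φ : F)
    (hφ : Function.Involutive φ) {a b : A} (ha : φ a = -a) (hb : φ b = -b) (x : A) :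
    twistedComm φ a (twistedComm φ b x) + twistedComm φ b (twistedComm φ a x) =
      (a * b + b * a) * x - x * (a * b + b * a) := by
  simp only [twistedComm, map_sub, map_mul, hφ x, ha, hb]
  noncomm_ring

theorem twistedComm_twistedComm_eq_neg (φ : F) (hφ : Function.Involutive φ)
    {a b : A} (ha : φ a = -a) (hb : φ b = -b) {x : A} (hx : Commute (a * b + b * a) x) :
    twistedComm φ a (twistedComm φ b x) = -twistedComm φ b (twistedComm φ a x) := by
  rw [eq_neg_iff_add_eq_zero, twistedComm_twistedComm_add_twistedComm_twistedComm φ hφ ha hb,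
    hx.eq, sub_self]

end TwistedCommutator

/-- Let `A` be a unital associative `ℂ`-algebra, `φ : A → A` an algebra
homomorphism with `φ ∘ φ = id`, and `D 1, …, D N ∈ A` with `φ (D n) = -D n` and the
anticommutation relations `D n * D m + D m * D n = 2 δ_{nm} 1`.  With the quantum gradients
`∇ₙ x = i (D n * x - φ x * D n)`, the maps `∇ₙ` and `∇ₘ` anticommute:
`∇ₙ ∘ ∇ₘ = -(∇ₘ ∘ ∇ₙ)`; in particular `∇ₙ ∘ ∇ₙ = 0`. -/
theorem stmt_0 {A : Type*} [Ring A] [Algebra ℂ A]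
    (φ : A →ₐ[ℂ] A) (hφ : ∀ x, φ (φ x) = x)
    {N : ℕ} (D : Fin N → A)
    (hDneg : ∀ n, φ (D n) = - D n)
    (hDanti : ∀ n m, D n * D m + D m * D n = (if n = m then (2 : ℂ) else 0) • (1 : A))
    (grad : Fin N → A →ₗ[ℂ] A)
    (hgrad : ∀ n x, grad n x = Complex.I • (D n * x - φ x * D n)) :
    ∀ n m : Fin N,
      (∀ x, grad n (grad m x) = - grad m (grad n x)) ∧
      (∀ x, grad n (grad n x) = 0) := by
  have grad_eq : ∀ n x, grad n x = Complex.I • twistedComm φ (D n) x := hgrad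
  have grad_grad : ∀ n m x, grad n (grad m x) = -twistedComm φ (D n) (twistedComm φ (D m) x) := by
    intro n m x
    simp only [grad_eq, twistedComm_smul, smul_smul, Complex.I_mul_I, neg_one_smul]
  have anticomm : ∀ n m x, grad n (grad m x) = -grad m (grad n x) := by
    intro n m x
    have central : Commute (D n * D m + D m * D n) x := by
      rw [hDanti]
      exact (Commute.one_left x).smul_left _
    rw [grad_grad, grad_grad, twistedComm_twistedComm_eq_neg φ hφ (hDneg n) (hDneg m) central]
  have : IsAddTorsionFree A := .of_isTorsionFree ℂ A
  exact fun n m => ⟨anticomm n m, fun x => self_eq_neg.mp (anticomm n n x)⟩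
end

section
/- For every 1 ≤ n ≤ N, ∇ₙ ∘ Δₙ = 4·∇ₙ as linear maps A → A, i.e. ∇ₙ(∇ₙ†(∇ₙ(x))) = 4·∇ₙ(x) for all x ∈ A. -/
/-! Write `d = D n`, so `d² = 1`, `φ d = -d`, and `∇ x = i (d x - φ x d)`. Every gradient `y = ∇ x`
satisfies `d y = φ y d`; for such `y` one gets `∇† y = -2i d y` and `∇ (d y) = 2i y`, so
`∇ ∇† y = 4 y`. -/

open Complex

section GradientIdentity

variable {A : Type*} [Ring A] [Algebra ℂ A] (φ : A →ₐ[ℂ] A) {d : A}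

theorem mul_self_eq_one_of_anticomm_self (h : d * d + d * d = (2 : ℂ) • (1 : A)) :
    d * d = 1 := by
  rw [← two_smul ℂ (d * d)] at h
  exact smul_right_injective A two_ne_zero h

theorem mul_grad_eq_grad_mul (hφ : ∀ x, φ (φ x) = x) (hd : d * d = 1) (hφd : φ d = -d)
    (x : A) :
    d * (I • (d * x - φ x * d)) = φ (I • (d * x - φ x * d)) * d := by
  have hright : φ (I • (d * x - φ x * d)) * d = I • (x - d * φ x * d) := by
    simp only [map_smul, map_sub, map_mul, hφ, hφd, smul_mul_assoc, sub_mul, neg_mul,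
      mul_neg, mul_assoc, hd, mul_one]
    abel_nf
  rw [hright, mul_smul_comm, mul_sub, ← mul_assoc, hd, one_mul, mul_assoc]

theorem grad_gradAdj_of_mul_eq (hd : d * d = 1) (hφd : φ d = -d) {y : A}
    (hy : d * y = φ y * d) :
    I • (d * ((-I) • (d * y + φ y * d)) - φ ((-I) • (d * y + φ y * d)) * d) = (4 : ℂ) • y := by
  have hadj : (-I) • (d * y + φ y * d) = (-2 * I) • (d * y) := by
    rw [← hy, ← two_smul ℂ (d * y), smul_smul]
    ring_nf
  have hsandwich : d * φ y * d = y := by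
    rw [mul_assoc, ← hy, ← mul_assoc, hd, one_mul]
  rw [hadj, map_smul, map_mul, hφd, mul_smul_comm, ← mul_assoc, hd, one_mul, smul_mul_assoc,
    neg_mul d, neg_mul (d * φ y), hsandwich, smul_neg, sub_neg_eq_add, ← add_smul, smul_smul]
  congr 1
  linear_combination (-4 : ℂ) * I_sq

end GradientIdentity

/-- In the setting of the differential dynamics of the `D n`,
with `∇ₙ x = i (D n * x - φ x * D n)`, `∇ₙ† x = -i (D n * x + φ x * D n)` and
`Δₙ = ∇ₙ† ∘ ∇ₙ`, one has `∇ₙ ∘ Δₙ = 4 ∇ₙ`, i.e. `∇ₙ (∇ₙ† (∇ₙ x)) = 4 ∇ₙ x` for all `x`. -/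
theorem stmt_2 {A : Type*} [Ring A] [Algebra ℂ A]
    (φ : A →ₐ[ℂ] A) (hφ : ∀ x, φ (φ x) = x)
    {N : ℕ} (D : Fin N → A)
    (hDneg : ∀ n, φ (D n) = - D n)
    (hDanti : ∀ n m, D n * D m + D m * D n = (if n = m then (2 : ℂ) else 0) • (1 : A))
    (grad : Fin N → A →ₗ[ℂ] A)
    (hgrad : ∀ n x, grad n x = Complex.I • (D n * x - φ x * D n))
    (gradAdj : Fin N → A →ₗ[ℂ] A)
    (hgradAdj : ∀ n x, gradAdj n x = (-Complex.I) • (D n * x + φ x * D n)) :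
    ∀ n : Fin N, ∀ x : A,
      grad n (gradAdj n (grad n x)) = (4 : ℂ) • grad n x := by
  intro n x
  have hd : D n * D n = 1 := mul_self_eq_one_of_anticomm_self (by simpa using hDanti n n)
  simp only [hgrad, hgradAdj]
  exact grad_gradAdj_of_mul_eq φ hd (hDneg n) (mul_grad_eq_grad_mul φ hφ hd (hDneg n) x)
end

section
/- Let p ∈ A be a nonzero projection (p = p* = p·p) and identify the state space of the compression algebra A_p := p·A·p with the set of densities K := {x ∈ A : p·x·p = x, 0 ≤ x, τ(x) = 1}. Then the relative interior of K, defined as relint K := {x ∈ K : for every y ∈ K there exists a real t > 1 with t·x + (1−t)·y ∈ K}, equals the set of elements of K that are invertible in A_p: relint K = {x ∈ K : there exists z ∈ A with p·z·p = z and x·z = z·x = p}. -/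
section Aux

variable {B : Type*} [CStarAlgebra B] [PartialOrder B] [StarOrderedRing B]

private lemma aux_exists_pos [Nontrivial B] {u : B} (hu : 0 ≤ u) (h : IsUnit u) :
    ∃ r : ℝ, 0 < r ∧ algebraMap ℝ B r ≤ u := by
  have hsa : IsSelfAdjoint u := .of_nonneg hu
  have key := (CFC.exists_pos_algebraMap_le_iff hsa).mpr ?_
  · obtain ⟨r, hr, hle⟩ := key; exact ⟨r, hr, hle⟩
  · intro x hx
    refine lt_of_le_of_ne (spectrum_nonneg_of_nonneg hu hx) ?_
    rintro rfl
    exact (spectrum.zero_notMem_iff ℝ).mpr h hx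

private lemma aux_isUnit {u : B} {r : ℝ} (hr : 0 < r) (hle : algebraMap ℝ B r ≤ u) :
    IsUnit u := by
  refine CStarAlgebra.isUnit_of_le _ hle (IsUnit.isStrictlyPositive ?_ ?_)
  · exact (isUnit_iff_ne_zero.mpr hr.ne').map (algebraMap ℝ B)
  · rw [Algebra.algebraMap_eq_smul_one]; exact smul_nonneg hr.le zero_le_one

end Aux

/-- Let `(A, τ)` be a finite-dimensional tracial C*-algebra and
`p ∈ A` a nonzero projection.  Identify the state space of the compression `A_p = p A p`
with the set of densities `K = {x : p x p = x, 0 ≤ x, τ x = 1}`.  Then the relative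
interior of `K` (those `x ∈ K` such that for every `y ∈ K` there is `t > 1` with
`t x + (1 - t) y ∈ K`) equals the set of elements of `K` that are invertible in `A_p`. -/
theorem stmt_10 {A : Type*} [CStarAlgebra A] [FiniteDimensional ℂ A]
    [PartialOrder A] [StarOrderedRing A]
    (τ : A →ₗ[ℂ] ℂ)
    (htr : ∀ x y : A, τ (x * y) = τ (y * x))
    (hpos : ∀ x : A, ∃ r : ℝ, 0 ≤ r ∧ τ (star x * x) = (r : ℂ))
    (hfaith : ∀ x : A, τ (star x * x) = 0 → x = 0)
    (p : A) (hp0 : p ≠ 0) (hpstar : star p = p) (hpidem : p * p = p)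
    (K : Set A) (hK : K = {x : A | p * x * p = x ∧ 0 ≤ x ∧ τ x = 1}) :
    {x ∈ K | ∀ y ∈ K, ∃ t : ℝ, 1 < t ∧ t • x + (1 - t) • y ∈ K} =
    {x ∈ K | ∃ z : A, p * z * p = z ∧ x * z = p ∧ z * x = p} := by
  haveI : Nontrivial A := nontrivial_of_ne p 0 hp0
  subst hK
  -- basic facts about p
  have hp_nonneg : 0 ≤ p := by
    have h := star_mul_self_nonneg p; rwa [hpstar, hpidem] at h
  have h1p_idem : (1 - p) * (1 - p) = 1 - p := by
    rw [sub_mul, one_mul, mul_sub, mul_one, hpidem, sub_self, sub_zero]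
  have h1p : 0 ≤ 1 - p := by
    have h := star_mul_self_nonneg (1 - p)
    rwa [star_sub, star_one, hpstar, h1p_idem] at h
  obtain ⟨r, hr0, hrτ⟩ := hpos p
  rw [hpstar, hpidem] at hrτ
  have hrne : r ≠ 0 := by
    rintro rfl
    exact hp0 (hfaith p (by rw [hpstar, hpidem, hrτ]; norm_num))
  have hrpos : 0 < r := lt_of_le_of_ne hr0 (Ne.symm hrne)
  ext x
  simp only [Set.mem_sep_iff, Set.mem_setOf_eq]
  constructor
  · -- relative interior point ⇒ invertible
    rintro ⟨⟨hx1, hx2, hx3⟩, hrel⟩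
    refine ⟨⟨hx1, hx2, hx3⟩, ?_⟩
    have hpx : p * x = x := by
      conv_lhs => rw [← hx1]
      simp only [← mul_assoc]
      rw [hpidem, hx1]
    have hxp : x * p = x := by
      conv_lhs => rw [← hx1]
      rw [mul_assoc (p * x) p p, hpidem, hx1]
    -- the test direction `y = r⁻¹ • p`
    have hyK : p * (r⁻¹ • p) * p = r⁻¹ • p ∧ 0 ≤ r⁻¹ • p ∧ τ (r⁻¹ • p) = 1 := by
      refine ⟨?_, smul_nonneg (inv_nonneg.mpr hr0) hp_nonneg, ?_⟩
      · rw [mul_smul_comm, smul_mul_assoc, hpidem, hpidem]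
      · rw [LinearMap.map_smul_of_tower, hrτ, Complex.real_smul, ← Complex.ofReal_mul,
          inv_mul_cancel₀ hrne, Complex.ofReal_one]
    obtain ⟨t, ht, hw1, hw2, hw3⟩ := hrel _ hyK
    have ht0 : 0 < t := lt_trans one_pos ht
    -- extract a lower bound ε • p ≤ x
    have h1 : ((t - 1) * r⁻¹) • p ≤ t • x := by
      rw [← sub_nonneg]
      have heq : t • x - ((t - 1) * r⁻¹) • p = t • x + (1 - t) • (r⁻¹ • p) := by module
      rw [heq]; exact hw2
    set ε : ℝ := t⁻¹ * ((t - 1) * r⁻¹) with hεdef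
    have hε : 0 < ε :=
      mul_pos (inv_pos.mpr ht0) (mul_pos (by linarith) (inv_pos.mpr hrpos))
    have hεp : ε • p ≤ x := by
      have h2 := smul_le_smul_of_nonneg_left h1 (inv_nonneg.mpr ht0.le)
      rwa [smul_smul, smul_smul, inv_mul_cancel₀ ht0.ne', one_smul] at h2
    -- `u = x + (1 - p)` is invertible in `A`
    set u : A := x + (1 - p) with hudef
    set c : ℝ := min ε 1 with hcdef
    have hc : 0 < c := lt_min hε one_pos
    have hcu : algebraMap ℝ A c ≤ u := by
      rw [← sub_nonneg, Algebra.algebraMap_eq_smul_one]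
      have heq : u - c • (1 : A) = (x - ε • p) + (ε - c) • p + (1 - c) • (1 - p) := by
        rw [hudef]; module
      rw [heq]
      exact add_nonneg (add_nonneg (sub_nonneg.mpr hεp)
        (smul_nonneg (sub_nonneg.mpr (min_le_left _ _)) hp_nonneg))
        (smul_nonneg (sub_nonneg.mpr (min_le_right _ _)) h1p)
    have hunit : IsUnit u := aux_isUnit hc hcu
    set v : A := ↑hunit.unit⁻¹ with hvdef
    have hpu : p * u = x := by
      rw [hudef, mul_add, mul_sub, mul_one, hpidem, hpx, sub_self, add_zero]
    have hup : u * p = x := by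
      rw [hudef, add_mul, sub_mul, one_mul, hpidem, hxp, sub_self, add_zero]
    have hxv : x * v = p := by
      calc x * v = p * u * v := by rw [hpu]
        _ = p * (u * v) := mul_assoc _ _ _
        _ = p := by rw [hunit.mul_val_inv, mul_one]
    have hvx : v * x = p := by
      calc v * x = v * (u * p) := by rw [hup]
        _ = v * u * p := (mul_assoc _ _ _).symm
        _ = p := by rw [hunit.val_inv_mul, one_mul]
    refine ⟨p * v * p, ?_, ?_, ?_⟩
    · calc p * (p * v * p) * p = (p * p) * v * (p * p) := by simp only [mul_assoc]
        _ = p * v * p := by rw [hpidem]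
    · calc x * (p * v * p) = (x * p) * v * p := by simp only [mul_assoc]
        _ = x * v * p := by rw [hxp]
        _ = p * p := by rw [hxv]
        _ = p := hpidem
    · calc (p * v * p) * x = p * v * (p * x) := by simp only [mul_assoc]
        _ = p * (v * x) := by rw [hpx, mul_assoc]
        _ = p * p := by rw [hvx]
        _ = p := hpidem
  · -- invertible ⇒ relative interior point
    rintro ⟨⟨hx1, hx2, hx3⟩, z, hz1, hz2, hz3⟩
    refine ⟨⟨hx1, hx2, hx3⟩, ?_⟩
    have hpx : p * x = x := by
      conv_lhs => rw [← hx1]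
      simp only [← mul_assoc]
      rw [hpidem, hx1]
    have hxp : x * p = x := by
      conv_lhs => rw [← hx1]
      rw [mul_assoc (p * x) p p, hpidem, hx1]
    have hpz : p * z = z := by
      conv_lhs => rw [← hz1]
      simp only [← mul_assoc]
      rw [hpidem, hz1]
    have hzp : z * p = z := by
      conv_lhs => rw [← hz1]
      rw [mul_assoc (p * z) p p, hpidem, hz1]
    set u : A := x + (1 - p) with hudef
    have hu0 : 0 ≤ u := add_nonneg hx2 h1p
    have hunit : IsUnit u := by
      refine ⟨⟨u, z + (1 - p), ?_, ?_⟩, rfl⟩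
      · rw [hudef, add_mul, mul_add, mul_add]
        rw [show x * (1 - p) = 0 by rw [mul_sub, mul_one, hxp, sub_self]]
        rw [show (1 - p) * z = 0 by rw [sub_mul, one_mul, hpz, sub_self]]
        rw [hz2, h1p_idem, add_zero, zero_add]
        abel
      · rw [hudef, add_mul, mul_add, mul_add]
        rw [show z * (1 - p) = 0 by rw [mul_sub, mul_one, hzp, sub_self]]
        rw [show (1 - p) * x = 0 by rw [sub_mul, one_mul, hpx, sub_self]]
        rw [hz3, h1p_idem, add_zero, zero_add]
        abel
    obtain ⟨ε, hε, hεu⟩ := aux_exists_pos hu0 hunit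
    -- compress the bound: ε • p ≤ x
    have hεp : ε • p ≤ x := by
      have h0 := star_left_conjugate_nonneg (sub_nonneg.mpr hεu) p
      rw [hpstar] at h0
      have hpup : p * u * p = x := by
        rw [hudef, mul_add, add_mul, mul_sub, mul_one, hpidem, sub_self, zero_mul,
          add_zero, hx1]
      have heq : p * (u - algebraMap ℝ A ε) * p = x - ε • p := by
        rw [Algebra.algebraMap_eq_smul_one, mul_sub, sub_mul, mul_smul_comm,
          smul_mul_assoc, mul_one, hpidem, hpup]
      rw [heq] at h0
      exact sub_nonneg.mp h0
    -- now take any y ∈ K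
    intro y hy
    obtain ⟨hy1, hy2, hy3⟩ := hy
    have hyb : 0 ≤ ‖y‖ • p - y := by
      have hle := IsSelfAdjoint.le_algebraMap_norm_self (IsSelfAdjoint.of_nonneg hy2)
      have h0 := star_left_conjugate_nonneg (sub_nonneg.mpr hle) p
      rw [hpstar] at h0
      have heq : p * (algebraMap ℝ A ‖y‖ - y) * p = ‖y‖ • p - y := by
        rw [Algebra.algebraMap_eq_smul_one, mul_sub, sub_mul, mul_smul_comm,
          smul_mul_assoc, mul_one, hpidem, hy1]
      rwa [heq] at h0
    set s : ℝ := ε / (‖y‖ + 1) with hsdef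
    have hy1pos : (0:ℝ) < ‖y‖ + 1 := by positivity
    have hs : 0 < s := div_pos hε hy1pos
    have hsval : s * (‖y‖ + 1) = ε := div_mul_cancel₀ _ hy1pos.ne'
    refine ⟨1 + s, by linarith, ?_, ?_, ?_⟩
    · simp only [mul_add, add_mul, mul_smul_comm, smul_mul_assoc, hx1, hy1]
    · have heq : (1 + s) • x + (1 - (1 + s)) • y
          = (1 + s) • (x - ε • p) + s • (‖y‖ • p - y) + ((1 + s) * ε - s * ‖y‖) • p := by
        module
      rw [heq]
      have hcoef : 0 ≤ (1 + s) * ε - s * ‖y‖ := by nlinarith [hs.le, hε.le]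
      exact add_nonneg (add_nonneg (smul_nonneg (by linarith) (sub_nonneg.mpr hεp))
        (smul_nonneg hs.le hyb)) (smul_nonneg hcoef hp_nonneg)
    · rw [map_add, LinearMap.map_smul_of_tower, LinearMap.map_smul_of_tower, hx3, hy3,
        Complex.real_smul, Complex.real_smul, mul_one, mul_one]
      push_cast
      ring
end

section
/- For every j ∈ ℕ: (i) for every u in the domain of the closure ∇̄, one has ∇(P_j u) = Q_j(∇̄ u); and (ii) for every v in the domain of the adjoint ∇*, one has ∇*(Q_j v) = P_j(∇* v). In other words, Q_j ∘ ∇̄ ⊆ ∇̄ ∘ P_j and P_j ∘ ∇* ⊆ ∇* ∘ Q_j as unbounded operators. -/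
/-- The quantum gradient `∇`, defined on the dense union `A₀ = ⋃ⱼ Aⱼ` (realized as the
supremum submodule `⨆ j, A j`), viewed as a densely defined unbounded operator `H →ₗ.[ℂ] K`. -/
noncomputable def gradPMap {H K : Type*}
    [NormedAddCommGroup H] [InnerProductSpace ℂ H]
    [NormedAddCommGroup K] [InnerProductSpace ℂ K]
    (A : ℕ → Submodule ℂ H) (grad : ↥(⨆ j, A j) →ₗ[ℂ] K) : H →ₗ.[ℂ] K :=
  ⟨⨆ j, A j, grad⟩

/-- Let `∇ : A₀ → K` be a quantum gradient (a closable densely defined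
operator between Hilbert spaces, defined on the union of an increasing sequence of
finite-dimensional subspaces `A j` with dense union, local in the sense that
`∇ (A j) ⊆ B j` and `∇* (B j) ⊆ A j`, with `B₀ ⊆ dom ∇*`).  Then for every `j`:
(i) for every `u ∈ dom ∇̄` one has `∇ (P_j u) = Q_j (∇̄ u)`, and
(ii) for every `v ∈ dom ∇*` one has `∇* (Q_j v) = P_j (∇* v)`;
i.e. `Q_j ∘ ∇̄ ⊆ ∇̄ ∘ P_j` and `P_j ∘ ∇* ⊆ ∇* ∘ Q_j`, where `P_j`, `Q_j` are the
orthogonal projections onto `A j` and `B j`. -/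
theorem stmt_11 {H K : Type*}
    [NormedAddCommGroup H] [InnerProductSpace ℂ H] [CompleteSpace H]
    [NormedAddCommGroup K] [InnerProductSpace ℂ K] [CompleteSpace K]
    (A : ℕ → Submodule ℂ H) (B : ℕ → Submodule ℂ K)
    (hAmono : Monotone A) (hBmono : Monotone B)
    [hAfin : ∀ j, FiniteDimensional ℂ (A j)] [hBfin : ∀ j, FiniteDimensional ℂ (B j)]
    (hAdense : Dense (↑(⨆ j, A j) : Set H)) (hBdense : Dense (↑(⨆ j, B j) : Set K))
    (grad : ↥(⨆ j, A j) →ₗ[ℂ] K)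
    (hloc : ∀ j, ∀ x : ↥(⨆ i, A i), (x : H) ∈ A j → grad x ∈ B j)
    (hclosable : (gradPMap A grad).IsClosable)
    (hBdom : ∀ j, B j ≤ (gradPMap A grad).adjoint.domain)
    (hadjloc : ∀ j, ∀ v : ((gradPMap A grad).adjoint.domain),
      (v : K) ∈ B j → (gradPMap A grad).adjoint v ∈ A j) :
    ∀ j : ℕ,
      (∀ u : ((gradPMap A grad).closure.domain),
        grad ⟨(Submodule.orthogonalProjection (A j) (u : H) : H),
              le_iSup A j (Submodule.orthogonalProjection (A j) (u : H)).2⟩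
          = (Submodule.orthogonalProjection (B j) ((gradPMap A grad).closure u) : K)) ∧
      (∀ v : ((gradPMap A grad).adjoint.domain),
        (gradPMap A grad).adjoint
            ⟨(Submodule.orthogonalProjection (B j) (v : K) : K),
              hBdom j (Submodule.orthogonalProjection (B j) (v : K)).2⟩
          = (Submodule.orthogonalProjection (A j) ((gradPMap A grad).adjoint v) : H)) := by
  intro j
  set T := gradPMap A grad with hT
  have hdense : Dense (T.domain : Set H) := hAdense
  have hfa : T.adjoint.IsFormalAdjoint T := LinearPMap.adjoint_isFormalAdjoint hdense
  -- key: commuting on the core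
  have key : ∀ x : ↥(⨆ i, A i),
      grad ⟨(Submodule.orthogonalProjection (A j) (x : H) : H),
            le_iSup A j (Submodule.orthogonalProjection (A j) (x : H)).2⟩
        = (Submodule.orthogonalProjection (B j) (grad x) : K) := by
    intro x
    set p : ↥(⨆ i, A i) := ⟨(Submodule.orthogonalProjection (A j) (x : H) : H),
      le_iSup A j (Submodule.orthogonalProjection (A j) (x : H)).2⟩ with hp
    have hpmem : (p : H) ∈ A j := (Submodule.orthogonalProjection (A j) (x : H)).2
    have hgp : grad p ∈ B j := hloc j p hpmem
    set w : ↥(⨆ i, A i) := x - p with hw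
    have hworth : (w : H) ∈ (A j)ᗮ := by
      have h0 := Submodule.sub_starProjection_mem_orthogonal (K := A j) (x : H)
      have : (w : H) = (x : H) - (Submodule.orthogonalProjection (A j) (x : H) : H) := rfl
      rwa [this]
    have hgw : grad w ∈ (B j)ᗮ := by
      rw [Submodule.mem_orthogonal]
      intro b hb
      have hb' : b ∈ T.adjoint.domain := hBdom j hb
      have := hfa ⟨b, hb'⟩ w
      -- ⟪T.adjoint ⟨b, hb'⟩, (w : H)⟫ = ⟪b, T w⟫
      have hadjmem : T.adjoint ⟨b, hb'⟩ ∈ A j := hadjloc j ⟨b, hb'⟩ hb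
      have h0 : (inner ℂ (T.adjoint ⟨b, hb'⟩) ((w : H)) : ℂ) = 0 :=
        (Submodule.mem_orthogonal (A j) (w : H)).1 hworth _ hadjmem
      have hTw : T w = grad w := rfl
      rw [hTw] at this
      rw [← this, h0]
    have hx : x = p + w := by simp [hw]
    calc grad p = (Submodule.orthogonalProjection (B j) (grad p) : K) := by
          exact (Submodule.starProjection_eq_self_iff.2 hgp).symm
      _ = (Submodule.orthogonalProjection (B j) (grad p) : K)
            + (Submodule.orthogonalProjection (B j) (grad w) : K) := by
          rw [Submodule.orthogonalProjectionOnto_apply_of_mem_orthogonal hgw]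
          simp
      _ = (Submodule.orthogonalProjection (B j) (grad x) : K) := by
          rw [hx, map_add, map_add, Submodule.coe_add]
  constructor
  · -- part (i)
    intro u
    -- continuous linear map versions
    let inclj : ↥(A j) →ₗ[ℂ] ↥(⨆ i, A i) := Submodule.inclusion (le_iSup A j)
    let gj : H →L[ℂ] K :=
      (LinearMap.toContinuousLinearMap (grad ∘ₗ inclj)).comp (Submodule.orthogonalProjection (A j))
    have hS : IsClosed {q : H × K | gj q.1 = (Submodule.orthogonalProjection (B j) q.2 : K)} :=
      isClosed_eq (gj.continuous.comp continuous_fst)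
        ((((B j).subtypeL.comp (Submodule.orthogonalProjection (B j))).continuous).comp continuous_snd)
    have hsub : (T.graph : Set (H × K)) ⊆
        {q : H × K | gj q.1 = (Submodule.orthogonalProjection (B j) q.2 : K)} := by
      rintro ⟨a, b⟩ hab
      rw [SetLike.mem_coe, LinearPMap.mem_graph_iff] at hab
      obtain ⟨x, hx1, hx2⟩ := hab
      have hgj : gj a = grad ⟨(Submodule.orthogonalProjection (A j) a : H),
          le_iSup A j (Submodule.orthogonalProjection (A j) a).2⟩ := rfl
      simp only [] at hx1 hx2
      show gj a = (Submodule.orthogonalProjection (B j) b : K)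
      subst hx1 hx2
      rw [hgj, key x]
      rfl
    have hu : ((u : H), T.closure u) ∈ closure (T.graph : Set (H × K)) := by
      have hm := T.closure.mem_graph u
      rw [← hclosable.graph_closure_eq_closure_graph] at hm
      rwa [← Submodule.topologicalClosure_coe, SetLike.mem_coe]
    have hfin := closure_minimal hsub hS hu
    exact hfin
  · -- part (ii)
    intro v
    set b' : T.adjoint.domain := ⟨(Submodule.orthogonalProjection (B j) (v : K) : K),
      hBdom j (Submodule.orthogonalProjection (B j) (v : K)).2⟩ with hb'
    have hmain : ∀ u : ↥(⨆ i, A i),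
        (inner ℂ (T.adjoint b' - (Submodule.orthogonalProjection (A j) (T.adjoint v) : H)) ((u : H)) : ℂ) = 0 := by
      intro u
      set p : ↥(⨆ i, A i) := ⟨(Submodule.orthogonalProjection (A j) (u : H) : H),
        le_iSup A j (Submodule.orthogonalProjection (A j) (u : H)).2⟩ with hp
      have h1 : (inner ℂ (T.adjoint b') ((u : H)) : ℂ) = inner ℂ ((b' : K)) (T u) := hfa b' u
      have h2 : (inner ℂ ((b' : K)) (grad u) : ℂ)
          = inner ℂ ((v : K)) ((Submodule.orthogonalProjection (B j) (grad u) : K)) :=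
        Submodule.inner_starProjection_left_eq_right (B j) (v : K) (grad u)
      have h3 : (inner ℂ ((v : K)) ((Submodule.orthogonalProjection (B j) (grad u) : K)) : ℂ)
          = inner ℂ ((v : K)) (T p) := by rw [← key u]; rfl
      have h4 : (inner ℂ ((v : K)) (T p) : ℂ) = inner ℂ (T.adjoint v) ((p : H)) := (hfa v p).symm
      have h5 : (inner ℂ (T.adjoint v) ((p : H)) : ℂ)
          = inner ℂ ((Submodule.orthogonalProjection (A j) (T.adjoint v) : H)) ((u : H)) :=
        (Submodule.inner_starProjection_left_eq_right (A j) (T.adjoint v) (u : H)).symm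
      have hTu : T u = grad u := rfl
      rw [inner_sub_left, h1, hTu, h2, h3, h4, h5, sub_self]
    have := hAdense.eq_zero_of_inner_left (𝕜 := ℂ) (fun u hu => hmain ⟨u, hu⟩)
    have h0 : T.adjoint b' - (Submodule.orthogonalProjection (A j) (T.adjoint v) : H) = 0 :=
      hAdense.eq_zero_of_inner_left (𝕜 := ℂ) (fun u hu => hmain ⟨u, hu⟩)
    have := sub_eq_zero.mp h0
    exact this
end

section
/- A₀ is a core for the closure ∇̄ and B₀ is a core for the adjoint ∇*, with the approximations realized by the projections: for every u ∈ dom(∇̄), ‖P_j u − u‖ → 0 and ‖∇(P_j u) − ∇̄ u‖ → 0 as j → ∞; and for every v ∈ dom(∇*), ‖Q_j v − v‖ → 0 and ‖∇*(Q_j v) − ∇* v‖ → 0 as j → ∞. -/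
open Filter

section Aux

variable {E F : Type*} [NormedAddCommGroup E] [InnerProductSpace ℂ E]
  [NormedAddCommGroup F] [InnerProductSpace ℂ F]

/-- Projections onto an increasing family of subspaces with dense union converge pointwise. -/
lemma my_proj_tendsto (A : ℕ → Submodule ℂ E) (hmono : Monotone A)
    [∀ j, FiniteDimensional ℂ (A j)]
    (hdense : Dense (↑(⨆ j, A j) : Set E)) (x : E) :
    Tendsto (fun j => ‖(Submodule.orthogonalProjectionOnto (A j) x : E) - x‖) atTop (nhds 0) := by
  rw [Metric.tendsto_atTop]
  intro ε hε
  obtain ⟨a, hax, ha⟩ := Metric.dense_iff.1 hdense x ε hε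
  obtain ⟨N, haN⟩ := (Submodule.mem_iSup_of_directed _ (hmono.directed_le)).1 ha
  refine ⟨N, fun j hj => ?_⟩
  have haj : a ∈ A j := hmono hj haN
  have hle : ‖x - (Submodule.orthogonalProjectionOnto (A j) x : E)‖ ≤ ‖x - a‖ := by
    rw [← Submodule.starProjection_apply, Submodule.starProjection_minimal]
    exact ciInf_le ⟨0, fun r ⟨y, hy⟩ => hy ▸ norm_nonneg _⟩ (⟨a, haj⟩ : A j)
  rw [Real.dist_eq, sub_zero, abs_of_nonneg (norm_nonneg _), norm_sub_rev]
  calc ‖x - (Submodule.orthogonalProjectionOnto (A j) x : E)‖ ≤ ‖x - a‖ := hle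
    _ < ε := by rw [← dist_eq_norm, dist_comm]; exact Metric.mem_ball.1 hax

lemma my_inner_proj_right {S : Submodule ℂ E} [FiniteDimensional ℂ S] {a : E} (ha : a ∈ S)
    (u : E) : (inner ℂ a ((Submodule.orthogonalProjectionOnto S u : E)) : ℂ) = inner ℂ a u := by
  have h := Submodule.sub_starProjection_mem_orthogonal (K := S) u
  have := (Submodule.mem_orthogonal _ _).1 h a ha
  rw [inner_sub_right] at this
  exact (sub_eq_zero.1 this).symm

lemma my_inner_proj_left {S : Submodule ℂ E} [FiniteDimensional ℂ S] {a : E} (ha : a ∈ S)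
    (u : E) : (inner ℂ ((Submodule.orthogonalProjectionOnto S u : E)) a : ℂ) = inner ℂ u a := by
  rw [← inner_conj_symm, my_inner_proj_right ha, inner_conj_symm]

lemma my_adjoint_closure_inner [CompleteSpace E] [CompleteSpace F] {T : E →ₗ.[ℂ] F}
    (hT : Dense (T.domain : Set E))
    (hc : T.IsClosable) (w : T.adjoint.domain) (u : T.closure.domain) :
    (inner ℂ (T.adjoint w) (u : E) : ℂ) = inner ℂ (w : F) (T.closure u) := by
  have hmem : ((u : E), T.closure u) ∈ T.graph.topologicalClosure := by
    rw [hc.graph_closure_eq_closure_graph]; exact T.closure.mem_graph u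
  have hset : ((u : E), T.closure u) ∈ closure (T.graph : Set (E × F)) := hmem
  have hclosed : IsClosed {p : E × F | (inner ℂ (T.adjoint w) p.1 : ℂ) = inner ℂ (w : F) p.2} :=
    isClosed_eq (Continuous.inner continuous_const continuous_fst)
      (Continuous.inner continuous_const continuous_snd)
  have hsub : (T.graph : Set (E × F)) ⊆
      {p : E × F | (inner ℂ (T.adjoint w) p.1 : ℂ) = inner ℂ (w : F) p.2} := by
    rintro ⟨x, y⟩ hxy
    obtain ⟨x', hx1, hx2⟩ := T.mem_graph_iff.1 hxy
    subst hx1; subst hx2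
    exact LinearPMap.adjoint_isFormalAdjoint hT w x'
  exact (hclosed.closure_subset_iff.2 hsub) hset

end Aux

/-- Let `∇ : A₀ → K` be a quantum gradient as in Statement 11.  Then
`A₀` is a core for the closure `∇̄` and `B₀` is a core for the adjoint `∇*`, with the
approximations realized by the orthogonal projections `P_j` onto `A j` and `Q_j` onto `B j`:
for `u ∈ dom ∇̄`, `‖P_j u - u‖ → 0` and `‖∇ (P_j u) - ∇̄ u‖ → 0`; and for `v ∈ dom ∇*`,
`‖Q_j v - v‖ → 0` and `‖∇* (Q_j v) - ∇* v‖ → 0` as `j → ∞`. -/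
theorem stmt_12 {H K : Type*}
    [NormedAddCommGroup H] [InnerProductSpace ℂ H] [CompleteSpace H]
    [NormedAddCommGroup K] [InnerProductSpace ℂ K] [CompleteSpace K]
    (A : ℕ → Submodule ℂ H) (B : ℕ → Submodule ℂ K)
    (hAmono : Monotone A) (hBmono : Monotone B)
    [hAfin : ∀ j, FiniteDimensional ℂ (A j)] [hBfin : ∀ j, FiniteDimensional ℂ (B j)]
    (hAdense : Dense (↑(⨆ j, A j) : Set H)) (hBdense : Dense (↑(⨆ j, B j) : Set K))
    (grad : ↥(⨆ j, A j) →ₗ[ℂ] K)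
    (hloc : ∀ j, ∀ x : ↥(⨆ i, A i), (x : H) ∈ A j → grad x ∈ B j)
    (hclosable : (gradPMap A grad).IsClosable)
    (hBdom : ∀ j, B j ≤ (gradPMap A grad).adjoint.domain)
    (hadjloc : ∀ j, ∀ v : ((gradPMap A grad).adjoint.domain),
      (v : K) ∈ B j → (gradPMap A grad).adjoint v ∈ A j) :
    (∀ u : ((gradPMap A grad).closure.domain),
      Tendsto (fun j => ‖(Submodule.orthogonalProjectionOnto (A j) (u : H) : H) - (u : H)‖)
        atTop (nhds 0) ∧
      Tendsto (fun j =>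
          ‖grad ⟨(Submodule.orthogonalProjectionOnto (A j) (u : H) : H),
                le_iSup A j (Submodule.orthogonalProjectionOnto (A j) (u : H)).2⟩
            - (gradPMap A grad).closure u‖)
        atTop (nhds 0)) ∧
    (∀ v : ((gradPMap A grad).adjoint.domain),
      Tendsto (fun j => ‖(Submodule.orthogonalProjectionOnto (B j) (v : K) : K) - (v : K)‖)
        atTop (nhds 0) ∧
      Tendsto (fun j =>
          ‖(gradPMap A grad).adjoint
              ⟨(Submodule.orthogonalProjectionOnto (B j) (v : K) : K),
                hBdom j (Submodule.orthogonalProjectionOnto (B j) (v : K)).2⟩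
            - (gradPMap A grad).adjoint v‖)
        atTop (nhds 0)) := by
  have hdense : Dense ((gradPMap A grad).domain : Set H) := hAdense
  constructor
  · intro u
    refine ⟨my_proj_tendsto A hAmono hAdense (u : H), ?_⟩
    have key : ∀ j, (grad ⟨(Submodule.orthogonalProjectionOnto (A j) (u : H) : H),
          le_iSup A j (Submodule.orthogonalProjectionOnto (A j) (u : H)).2⟩ : K)
        = (Submodule.orthogonalProjectionOnto (B j) ((gradPMap A grad).closure u) : K) := by
      intro j
      symm
      rw [← Submodule.starProjection_apply]
      apply Submodule.eq_starProjection_of_mem_of_inner_eq_zero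
      · exact hloc j _ (Submodule.orthogonalProjectionOnto (A j) (u : H)).2
      · intro w hw
        set w' : ((gradPMap A grad).adjoint.domain) := ⟨w, hBdom j hw⟩ with hw'
        set x : ((gradPMap A grad).domain) :=
          ⟨(Submodule.orthogonalProjectionOnto (A j) (u : H) : H),
            le_iSup A j (Submodule.orthogonalProjectionOnto (A j) (u : H)).2⟩ with hx
        have h1 : (inner ℂ w ((gradPMap A grad).closure u) : ℂ)
            = inner ℂ ((gradPMap A grad).adjoint w' : H) (u : H) :=
          (my_adjoint_closure_inner hdense hclosable w' u).symm
        have h2 : (inner ℂ w (grad x) : ℂ)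
            = inner ℂ ((gradPMap A grad).adjoint w' : H) (x : H) :=
          (LinearPMap.adjoint_isFormalAdjoint hdense w' x).symm
        have h3 : (inner ℂ ((gradPMap A grad).adjoint w' : H) (x : H) : ℂ)
            = inner ℂ ((gradPMap A grad).adjoint w' : H) (u : H) :=
          my_inner_proj_right (hadjloc j w' hw) (u : H)
        rw [← inner_conj_symm, inner_sub_right]
        have : (inner ℂ w ((gradPMap A grad).closure u) : ℂ)
            - inner ℂ w (grad x) = 0 := by rw [h1, h2, h3, sub_self]
        exact (congrArg (starRingEnd ℂ) this).trans (map_zero _)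
    have h := my_proj_tendsto B hBmono hBdense ((gradPMap A grad).closure u)
    simpa only [key] using h
  · intro v
    refine ⟨my_proj_tendsto B hBmono hBdense (v : K), ?_⟩
    have key : ∀ j, ((gradPMap A grad).adjoint
          ⟨(Submodule.orthogonalProjectionOnto (B j) (v : K) : K),
            hBdom j (Submodule.orthogonalProjectionOnto (B j) (v : K)).2⟩ : H)
        = (Submodule.orthogonalProjectionOnto (A j) ((gradPMap A grad).adjoint v : H) : H) := by
      intro j
      symm
      rw [← Submodule.starProjection_apply]
      apply Submodule.eq_starProjection_of_mem_of_inner_eq_zero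
      · exact hadjloc j _ (Submodule.orthogonalProjectionOnto (B j) (v : K)).2
      · intro a ha
        set q' : ((gradPMap A grad).adjoint.domain) :=
          ⟨(Submodule.orthogonalProjectionOnto (B j) (v : K) : K),
            hBdom j (Submodule.orthogonalProjectionOnto (B j) (v : K)).2⟩ with hq'
        set x : ((gradPMap A grad).domain) := ⟨a, le_iSup A j ha⟩ with hx
        rw [inner_sub_left]
        have h1 : (inner ℂ ((gradPMap A grad).adjoint v : H) a : ℂ)
            = inner ℂ (v : K) (grad x) :=
          LinearPMap.adjoint_isFormalAdjoint hdense v x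
        have h2 : (inner ℂ ((gradPMap A grad).adjoint q' : H) a : ℂ)
            = inner ℂ ((Submodule.orthogonalProjectionOnto (B j) (v : K) : K)) (grad x) :=
          LinearPMap.adjoint_isFormalAdjoint hdense q' x
        have h3 : (inner ℂ ((Submodule.orthogonalProjectionOnto (B j) (v : K) : K)) (grad x) : ℂ)
            = inner ℂ (v : K) (grad x) :=
          my_inner_proj_left (hloc j x ha) (v : K)
        rw [h1, h2, h3, sub_self]
    have h := my_proj_tendsto A hAmono hAdense ((gradPMap A grad).adjoint v)
    simpa only [key] using h
end

section
/- For every x ∈ A, the A-valued function on ℝ given by t ↦ exp(i·t·D)·(P x)·exp(−i·t·D) + exp(i·t·D)·(P^⊥ x)·exp(i·t·D) is differentiable at t = 0 with derivative i·(D·x − φ(x)·D). (This is the formula ∇^{α,V}(x) = i(D·x − φ(x)·D) for the quantum gradient induced by the differential dynamic (α_t, V_t, P) of D, where α_t(y) = e^{itD}·y·e^{−itD} and V_t(y) = e^{itD}·y·e^{itD}.) -/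
open NormedSpace

/-- Let `A` be a unital complex Banach algebra, `φ : A → A` a continuous
algebra homomorphism with `φ ∘ φ = id`, `P = ½(id + φ)` and `P^⊥ = id - P` the eigenspace
projections of `φ`, and `D ∈ A` with `φ D = -D`.  Then for every `x ∈ A` the map
`t ↦ e^{itD} (P x) e^{-itD} + e^{itD} (P^⊥ x) e^{itD}` is differentiable at `t = 0` with
derivative `i (D x - φ(x) D)` — the quantum gradient `∇^{α,V}` of the differential dynamic
of `D`. -/
theorem stmt_13 {A : Type*} [NormedRing A] [NormedAlgebra ℂ A] [CompleteSpace A]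
    (φ : A →ₐ[ℂ] A) (hφcont : Continuous φ) (hφinv : ∀ x, φ (φ x) = x)
    (D : A) (hD : φ D = - D) :
    ∀ x : A,
      HasDerivAt (fun t : ℝ =>
          exp ((Complex.I * (t : ℂ)) • D) * ((1 / 2 : ℂ) • (x + φ x)) *
            exp ((-(Complex.I * (t : ℂ))) • D) +
          exp ((Complex.I * (t : ℂ)) • D) * ((1 / 2 : ℂ) • (x - φ x)) *
            exp ((Complex.I * (t : ℂ)) • D))
        (Complex.I • (D * x - φ x * D)) 0 := by
  intro x
  have key : ∀ c : A, HasDerivAt (fun t : ℝ => exp ((t : ℂ) • c)) c 0 := by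
    intro c
    have h := hasDerivAt_exp_smul_const (𝕂 := ℝ) c (0 : ℝ)
    simp only [zero_smul, exp_zero, one_mul] at h
    have he : (fun t : ℝ => exp ((t : ℂ) • c)) = fun t : ℝ => exp (t • c) := by
      funext t
      rw [show ((t : ℂ)) = algebraMap ℝ ℂ t from rfl,
        algebraMap_smul]
    rw [he]; exact h
  have hg : HasDerivAt (fun t : ℝ => exp ((Complex.I * (t : ℂ)) • D)) (Complex.I • D) 0 := by
    have h := key (Complex.I • D)
    have he : (fun t : ℝ => exp ((Complex.I * (t : ℂ)) • D))
        = fun t : ℝ => exp ((t : ℂ) • (Complex.I • D)) := by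
      funext t; rw [smul_smul, mul_comm]
    rw [he]; exact h
  have hg' : HasDerivAt (fun t : ℝ => exp ((-(Complex.I * (t : ℂ))) • D))
      (-(Complex.I • D)) 0 := by
    have h := key (-(Complex.I • D))
    have he : (fun t : ℝ => exp ((-(Complex.I * (t : ℂ))) • D))
        = fun t : ℝ => exp ((t : ℂ) • (-(Complex.I • D))) := by
      funext t; rw [smul_neg, smul_smul, mul_comm, neg_smul]
    rw [he]; exact h
  have h1 := ((hg.mul_const ((1 / 2 : ℂ) • (x + φ x))).mul hg').add
    ((hg.mul_const ((1 / 2 : ℂ) • (x - φ x))).mul hg)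
  have hzero : exp ((Complex.I * ((0 : ℝ) : ℂ)) • D) = 1 := by simp
  have hzero' : exp ((-(Complex.I * ((0 : ℝ) : ℂ))) • D) = 1 := by simp
  rw [hzero, hzero'] at h1
  convert h1 using 1
  · rfl
  · rfl
  simp only [mul_one, one_mul, mul_smul_comm, smul_mul_assoc, mul_add, add_mul, mul_sub,
    sub_mul, smul_add, smul_sub, smul_smul, mul_neg, neg_mul, smul_neg, neg_smul]
  module
end

section
/- Suppose the pair (μ, w) satisfies the continuity equation: for every x ∈ A₀ the function t ↦ μ(t)(x) is absolutely continuous on [a, b] and (d/dt) μ(t)(x) = w(t)(∇x) for almost every t ∈ [a, b]. Then the total mass is preserved along the path: ‖μ(t)‖_{A*} = ‖μ(a)‖_{A*} for all t ∈ [a, b]. -/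
/-!
Since `∇` kills the units `e j`, the continuity equation makes `t ↦ μ t (e j)` constant. The
norm of a positive functional `φ` is determined by these values: the `e j` are projections, so
Cauchy–Schwarz for the form `(x, y) ↦ φ (x⋆ y)` gives `|φ x|² ≤ φ (e j) φ (x⋆ x) ≤ M ‖φ‖ ‖x‖²`
for `x ∈ A_j` whenever `M` bounds all `φ (e j)`; by density `‖φ‖² ≤ M ‖φ‖`, i.e. `‖φ‖ ≤ M`,
while conversely `φ (e j) ≤ ‖φ‖`.
-/

open MeasureTheory intervalIntegral
open scoped ComplexOrder

lemma IsStarProjection.of_mem_of_forall_mul_eq {R A : Type*} [CommSemiring R] [StarRing R]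
    [NonUnitalSemiring A] [StarRing A] [Module R A] [StarModule R A]
    {s : NonUnitalStarSubalgebra R A} {e : A} (he : e ∈ s)
    (hunit : ∀ x ∈ s, e * x = x ∧ x * e = x) : IsStarProjection e := by
  have hstar : star e * e = star e := (hunit _ (star_mem he)).2
  have h := congrArg star hstar
  rw [star_mul, star_star, hstar] at h
  exact ⟨(hunit e he).1, h⟩

section PositiveFunctional

variable {A : Type*} [NonUnitalCStarAlgebra A]

lemma norm_apply_star_mul_sq_le (φ : A →ₗ[ℂ] ℂ) (hφ : ∀ x, 0 ≤ φ (star x * x)) (x y : A) :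
    ‖φ (star x * y)‖ ^ 2 ≤ (φ (star x * x)).re * (φ (star y * y)).re := by
  -- Under the spectral order `φ` is a positive map, and its GNS semi-inner product is
  -- `⟪x, y⟫ = φ (x⋆ y)`.
  let _ := CStarAlgebra.spectralOrder A
  let _ := CStarAlgebra.spectralOrderedRing A
  let f : A →ₚ[ℂ] ℂ := .mk₀ φ fun z hz => by
    obtain ⟨b, rfl⟩ := CStarAlgebra.nonneg_iff_eq_star_mul_self.mp hz
    exact hφ b
  have h := norm_inner_le_norm (𝕜 := ℂ) (f.toPreGNS x) (f.toPreGNS y)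
  rw [f.preGNS_inner_def, f.preGNS_norm_def, f.preGNS_norm_def] at h
  calc ‖φ (star x * y)‖ ^ 2 ≤ (√(φ (star x * x)).re * √(φ (star y * y)).re) ^ 2 :=
        pow_le_pow_left₀ (norm_nonneg _) h 2
    _ = (φ (star x * x)).re * (φ (star y * y)).re := by
        rw [mul_pow, Real.sq_sqrt (Complex.nonneg_iff.mp (hφ x)).1,
          Real.sq_sqrt (Complex.nonneg_iff.mp (hφ y)).1]

variable {S : ℕ → NonUnitalStarSubalgebra ℂ A} {e : ℕ → A}

lemma norm_le_of_forall_re_apply_le (hdense : Dense (⋃ j, (S j : Set A)))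
    (he : ∀ j, e j ∈ S j) (hunit : ∀ j, ∀ x ∈ S j, e j * x = x ∧ x * e j = x)
    (φ : A →L[ℂ] ℂ) (hφ : ∀ x, 0 ≤ φ (star x * x)) {M : ℝ} (hM : ∀ j, (φ (e j)).re ≤ M) :
    ‖φ‖ ≤ M := by
  have hproj j : IsStarProjection (e j) := .of_mem_of_forall_mul_eq (he j) (hunit j)
  have hM₀ : 0 ≤ M := by
    have h := Complex.nonneg_iff.mp (hφ (e 0))
    rw [(hproj 0).isSelfAdjoint.star_eq, (hproj 0).isIdempotentElem.eq] at h
    exact h.1.trans (hM 0)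
  have hsq : ∀ x, ‖φ x‖ ^ 2 ≤ M * ‖φ‖ * ‖x‖ ^ 2 := by
    refine hdense.induction (fun x hx => ?_)
      (isClosed_le (by fun_prop) (by fun_prop))
    obtain ⟨_, ⟨j, rfl⟩, hxj⟩ := hx
    have hcs := norm_apply_star_mul_sq_le (φ : A →ₗ[ℂ] ℂ) hφ (e j) x
    simp only [ContinuousLinearMap.coe_coe, (hproj j).isSelfAdjoint.star_eq,
      (hproj j).isIdempotentElem.eq, (hunit j x hxj).1] at hcs
    calc ‖φ x‖ ^ 2 ≤ (φ (e j)).re * (φ (star x * x)).re := hcs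
      _ ≤ M * (‖φ‖ * ‖x‖ ^ 2) := by
        refine mul_le_mul (hM j) ?_ (Complex.nonneg_iff.mp (hφ x)).1 hM₀
        calc (φ (star x * x)).re ≤ ‖φ (star x * x)‖ := Complex.re_le_norm _
          _ ≤ ‖φ‖ * ‖star x * x‖ := φ.le_opNorm _
          _ = ‖φ‖ * ‖x‖ ^ 2 := by rw [CStarRing.norm_star_mul_self, sq]
      _ = M * ‖φ‖ * ‖x‖ ^ 2 := by ring
  have hnorm : ‖φ‖ ≤ √(M * ‖φ‖) := by
    refine φ.opNorm_le_bound (Real.sqrt_nonneg _) fun x => ?_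
    rw [← Real.sqrt_sq (norm_nonneg x), ← Real.sqrt_mul (by positivity)]
    exact (Real.le_sqrt (norm_nonneg _) (by positivity)).mpr (hsq x)
  have h := (Real.le_sqrt (norm_nonneg _) (by positivity)).mp hnorm
  nlinarith [norm_nonneg φ]

lemma norm_le_norm_of_forall_apply_eq (hdense : Dense (⋃ j, (S j : Set A)))
    (he : ∀ j, e j ∈ S j) (hunit : ∀ j, ∀ x ∈ S j, e j * x = x ∧ x * e j = x)
    (φ ψ : A →L[ℂ] ℂ) (hφ : ∀ x, 0 ≤ φ (star x * x)) (h : ∀ j, φ (e j) = ψ (e j)) :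
    ‖φ‖ ≤ ‖ψ‖ := by
  refine norm_le_of_forall_re_apply_le hdense he hunit φ hφ fun j => ?_
  calc (φ (e j)).re = (ψ (e j)).re := by rw [h j]
    _ ≤ ‖ψ (e j)‖ := Complex.re_le_norm _
    _ ≤ ‖ψ‖ * ‖e j‖ := ψ.le_opNorm _
    _ ≤ ‖ψ‖ := mul_le_of_le_one_right (norm_nonneg _)
        (IsStarProjection.of_mem_of_forall_mul_eq (he j) (hunit j)).norm_le

end PositiveFunctional

theorem stmt_19_general {A : Type*} [NonUnitalCStarAlgebra A]
    {B : Type*} [NormedAddCommGroup B] [NormedSpace ℂ B]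
    (S : ℕ → NonUnitalStarSubalgebra ℂ A)
    (hdense : Dense (⋃ j, (S j : Set A)))
    (e : ℕ → A) (he : ∀ j, e j ∈ S j)
    (hunit : ∀ j, ∀ a' ∈ S j, e j * a' = a' ∧ a' * e j = a')
    (grad : A →ₗ[ℂ] B) (hgrad0 : ∀ j, grad (e j) = 0)
    (a b : ℝ)
    (μ : ℝ → (A →L[ℂ] ℂ)) (w : ℝ → (B →L[ℂ] ℂ))
    (hpos : ∀ t ∈ Set.Icc a b, ∀ x : A, ∃ r : ℝ, 0 ≤ r ∧ μ t (star x * x) = (r : ℂ))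
    (heq : ∀ j, ∀ x ∈ S j,
      IntervalIntegrable (fun s => w s (grad x)) volume a b ∧
        ∀ t ∈ Set.Icc a b, μ t x = μ a x + ∫ s in a..t, w s (grad x)) :
    ∀ t ∈ Set.Icc a b, ‖μ t‖ = ‖μ a‖ := by
  intro t ht
  have hnonneg : ∀ s ∈ Set.Icc a b, ∀ x, 0 ≤ μ s (star x * x) := fun s hs x => by
    obtain ⟨r, hr, h⟩ := hpos s hs x
    exact h ▸ Complex.zero_le_real.mpr hr
  have hunits j : μ t (e j) = μ a (e j) := by
    simpa [hgrad0 j] using (heq j (e j) (he j)).2 t ht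
  have ha : a ∈ Set.Icc a b := ⟨le_rfl, ht.1.trans ht.2⟩
  exact le_antisymm
    (norm_le_norm_of_forall_apply_eq hdense he hunit _ _ (hnonneg t ht) hunits)
    (norm_le_norm_of_forall_apply_eq hdense he hunit _ _ (hnonneg a ha) fun j => (hunits j).symm)

/-- Let `A` be an AF-C*-algebra with generating finite-dimensional
*-subalgebras `S j` (units `e j`, dense union), `B` a normed `ℂ`-vector space, and
`∇ : A₀ → B` linear with `∇ (e j) = 0` for all `j`.  Suppose `μ : [a,b] → A*` is a path of
positive continuous linear functionals and `w : [a,b] → B*` a path of continuous linear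
functionals such that `(μ, w)` satisfies the continuity equation: for every `x ∈ A₀` the
function `t ↦ μ(t)(x)` is absolutely continuous with `(d/dt) μ(t)(x) = w(t)(∇ x)` a.e.
(encoded in integrated form `μ(t)(x) = μ(a)(x) + ∫_a^t w(s)(∇ x) ds`).  Then the total mass
is preserved: `‖μ(t)‖_{A*} = ‖μ(a)‖_{A*}` for all `t ∈ [a, b]`. -/
theorem stmt_19 {A : Type*} [NonUnitalCStarAlgebra A]
    {B : Type*} [NormedAddCommGroup B] [NormedSpace ℂ B]
    (S : ℕ → NonUnitalStarSubalgebra ℂ A) (hmono : Monotone S)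
    [hfin : ∀ j, FiniteDimensional ℂ (S j)]
    (hdense : Dense (⋃ j, (S j : Set A)))
    (e : ℕ → A) (he : ∀ j, e j ∈ S j)
    (hunit : ∀ j, ∀ a' ∈ S j, e j * a' = a' ∧ a' * e j = a')
    (grad : A →ₗ[ℂ] B) (hgrad0 : ∀ j, grad (e j) = 0)
    (a b : ℝ) (hab : a ≤ b)
    (μ : ℝ → (A →L[ℂ] ℂ)) (w : ℝ → (B →L[ℂ] ℂ))
    (hpos : ∀ t ∈ Set.Icc a b, ∀ x : A, ∃ r : ℝ, 0 ≤ r ∧ μ t (star x * x) = (r : ℂ))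
    (heq : ∀ j, ∀ x ∈ S j,
      IntervalIntegrable (fun s => w s (grad x)) volume a b ∧
        ∀ t ∈ Set.Icc a b, μ t x = μ a x + ∫ s in a..t, w s (grad x)) :
    ∀ t ∈ Set.Icc a b, ‖μ t‖ = ‖μ a‖ :=
  stmt_19_general S hdense e he hunit grad hgrad0 a b μ w hpos heq
end
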